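/- arXiv:1807.04714 — 4 statements merged into one kernel-verified Lean document; each statement's English description precedes it below -/
import Mathlib

section
/- Let γ ∈ (0,π) ∪ (π,2π). Then f(γ) := 1 + (π − γ)·cot(γ) > 0. -/
open Real

lemma key_tcos_lt_sin (t : ℝ) (h0 : 0 < t) (h1 : t < π) :
    t * Real.cos t < Real.sin t := by
  have hs : 0 < Real.sin t := Real.sin_pos_of_pos_of_lt_pi h0 h1
  rcases le_or_gt (Real.cos t) 0 with hc | hc
  · nlinarith
  · have ht2 : t < π / 2 := by
      by_contra h
      push_neg at h
      have : Real.cos t ≤ 0 :=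
        Real.cos_nonpos_of_pi_div_two_le_of_le h (by linarith [Real.pi_pos])
      linarith
    have := Real.lt_tan h0 ht2
    rw [Real.tan_eq_sin_div_cos] at this
    calc t * Real.cos t < (Real.sin t / Real.cos t) * Real.cos t := by
          exact mul_lt_mul_of_pos_right this hc
      _ = Real.sin t := div_mul_cancel₀ _ (ne_of_gt hc)

theorem corner_function_positive (γ : ℝ)
    (hγ : γ ∈ Set.Ioo 0 π ∪ Set.Ioo π (2 * π)) :
    0 < 1 + (π - γ) * (Real.cos γ / Real.sin γ) := by
  rcases hγ with ⟨h0, h1⟩ | ⟨h0, h1⟩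
  · have hs : 0 < Real.sin γ := Real.sin_pos_of_pos_of_lt_pi h0 h1
    rw [show (1 : ℝ) + (π - γ) * (Real.cos γ / Real.sin γ)
        = (Real.sin γ + (π - γ) * Real.cos γ) / Real.sin γ by
      field_simp]
    apply div_pos _ hs
    rcases eq_or_lt_of_le h0.le with h | h
    · simp [← h]; positivity
    · -- t = π - γ ∈ (0, π) if γ < π; handle via key lemma with t = π - γ
      set t := π - γ with ht
      have h0t : 0 < t := by simp [ht]; linarith
      have h1t : t < π := by simp [ht]; linarith
      have hk := key_tcos_lt_sin t h0t h1t
      have hsin : Real.sin t = Real.sin γ := by rw [ht, Real.sin_pi_sub]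
      have hcos : Real.cos t = -Real.cos γ := by rw [ht, Real.cos_pi_sub]
      rw [hsin, hcos] at hk
      linarith
  · set t := γ - π with ht
    have h0t : 0 < t := by simp [ht]; linarith
    have h1t : t < π := by simp [ht]; linarith
    have hsin : Real.sin t = -Real.sin γ := by
      rw [ht, Real.sin_sub, Real.sin_pi, Real.cos_pi]; ring
    have hs : Real.sin γ < 0 := by
      have := Real.sin_pos_of_pos_of_lt_pi h0t h1t
      linarith [hsin ▸ this]
    have hne : Real.sin γ ≠ 0 := ne_of_lt hs
    rw [show (1 : ℝ) + (π - γ) * (Real.cos γ / Real.sin γ)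
        = (Real.sin γ + (π - γ) * Real.cos γ) / Real.sin γ by
      field_simp]
    apply div_pos_of_neg_of_neg _ hs
    have hk := key_tcos_lt_sin t h0t h1t
    have hcos : Real.cos t = -Real.cos γ := by
      rw [ht, Real.cos_sub, Real.sin_pi, Real.cos_pi]; ring
    rw [hsin, hcos] at hk
    have : π - γ = -t := by rw [ht]; ring
    rw [this]
    linarith
end

section
/- Let n ≥ 3 and let P_n be a regular n-gon, each of whose interior angles equals γ_n = π(n−2)/n. Then the sum over all n vertices of f(γ_n), where f(γ) = 1 + (π−γ)cot(γ), tends to 0 as n → ∞. -/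
/-!
With `t = 2π/n` the interior angle is `π - t`, so `f(π - t) = 1 - t cot t`, and the Taylor bounds
on `sin` and `cos` give `|1 - t cot t| ≤ t²` for `0 < t ≤ 1`. Hence the corner sum is at most
`n · (2π/n)² = 4π²/n` in absolute value.
-/

open Real Filter Topology

noncomputable def cornerTerm (γ : ℝ) : ℝ := 1 + (π - γ) * (cos γ / sin γ)

lemma cornerTerm_pi_sub (t : ℝ) : cornerTerm (π - t) = 1 - t * (cos t / sin t) := by
  rw [cornerTerm, cos_pi_sub, sin_pi_sub]
  ring

lemma regular_interior_angle_eq {n : ℝ} (hn : n ≠ 0) : π * (n - 2) / n = π - 2 * π / n := by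
  field_simp

lemma abs_sin_sub_mul_cos_le {x : ℝ} (hx : 0 < x) : |sin x - x * cos x| ≤ x ^ 3 / 2 := by
  have hsin_lower := sin_gt_sub_cube hx
  have hsin_upper := sin_lt hx
  have hcos_lower : 1 - x ^ 2 / 2 ≤ cos x := one_sub_sq_div_two_le_cos
  have hcos_upper := cos_le_one x
  rw [abs_le]
  constructor <;> nlinarith

lemma abs_one_sub_mul_cot_le_sq {x : ℝ} (hx0 : 0 < x) (hx1 : x ≤ 1) :
    |1 - x * (cos x / sin x)| ≤ x ^ 2 := by
  have hcube : x ^ 3 ≤ x := by simpa using pow_le_pow_of_le_one hx0.le hx1 (by norm_num : 1 ≤ 3)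
  have hsin : 3 * x / 4 ≤ sin x := by linarith [sin_gt_sub_cube hx0]
  have hsin_pos : 0 < sin x := by linarith
  rw [show 1 - x * (cos x / sin x) = (sin x - x * cos x) / sin x by field_simp,
    abs_div, abs_of_pos hsin_pos, div_le_iff₀ hsin_pos]
  calc |sin x - x * cos x| ≤ x ^ 3 / 2 := abs_sin_sub_mul_cos_le hx0
    _ ≤ x ^ 2 * sin x := by nlinarith [mul_le_mul_of_nonneg_left hsin (sq_nonneg x)]

/-- For regular `n`-gons with interior angles `γ_n = π(n-2)/n`, the total corner
contribution `n · f(γ_n)`, with `f(γ) = 1 + (π-γ)cot γ`, tends to `0` as `n → ∞`. -/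
theorem regular_ngon_corner_sum_tendsto_zero :
    Tendsto (fun n : ℕ =>
        (n : ℝ) * (1 + (π - π * ((n : ℝ) - 2) / n) *
          (Real.cos (π * ((n : ℝ) - 2) / n) / Real.sin (π * ((n : ℝ) - 2) / n))))
      atTop (𝓝 0) := by
  change Tendsto (fun n : ℕ => (n : ℝ) * cornerTerm (π * ((n : ℝ) - 2) / n)) atTop (𝓝 0)
  refine squeeze_zero_norm' ?_ (tendsto_const_div_atTop_nhds_zero_nat (4 * π ^ 2))
  filter_upwards [eventually_ge_atTop 7] with n hn
  have hn0 : (0 : ℝ) < n := by positivity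
  have ht0 : 0 < 2 * π / n := by positivity
  have ht1 : 2 * π / n ≤ 1 := by
    rw [div_le_one hn0]
    have : (7 : ℝ) ≤ n := by exact_mod_cast hn
    linarith [pi_lt_d2]
  rw [regular_interior_angle_eq hn0.ne', cornerTerm_pi_sub, norm_mul, norm_eq_abs, norm_eq_abs,
    abs_of_pos hn0]
  calc (n : ℝ) * |1 - 2 * π / n * (cos (2 * π / n) / sin (2 * π / n))|
      ≤ n * (2 * π / n) ^ 2 := by gcongr; exact abs_one_sub_mul_cot_le_sq ht0 ht1
    _ = 4 * π ^ 2 / n := by field_simp; ring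
end

section
/- Let γ ∈ (0,π) and let C = { (r cos θ, r sin θ) : r ≥ 0, θ ∈ [0,γ] } ⊂ ℝ² be the closed sector of opening angle γ with one boundary ray along the positive x-axis. Then for every y = (y₁, y₂) ∈ C, the Lebesgue area of (y − C) ∩ C equals y₁·y₂ − cot(γ)·y₂². -/
/-!
The linear map `T (s, t) = (s + t cos γ, t sin γ)` carries the closed quadrant `Q = {p | 0 ≤ p}`
onto `C`: in polar coordinates `s = r sin (γ - θ) / sin γ` and `t = r sin θ / sin γ`. Writing
`y = T x` with `x ∈ Q`, injectivity and additivity of `T` give `(y - C) ∩ C = T ((x - Q) ∩ Q)`,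
and `(x - Q) ∩ Q` is the box `[0, x]` of area `x₁ x₂`. Hence the area is
`det T · x₁ x₂ = sin γ · x₁ x₂`, which is `y₁ y₂ - cot γ · y₂²` since `y₂ = x₂ sin γ`.
-/

open Real MeasureTheory Set

lemma image_const_sub_image_inter_image {E F G : Type*} [AddGroup E] [AddGroup F] [FunLike G E F]
    [AddMonoidHomClass G E F] {f : G} (hf : Function.Injective f) (x : E) (S : Set E) :
    (fun c => f x - c) '' (f '' S) ∩ f '' S = f '' ((fun c => x - c) '' S ∩ S) := by
  rw [image_inter hf, image_image, image_image]
  simp only [map_sub]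

lemma volume_Icc_prod (a b : ℝ × ℝ) :
    volume (Icc a b) = ENNReal.ofReal (b.1 - a.1) * ENNReal.ofReal (b.2 - a.2) := by
  rw [Icc_prod_eq, Measure.volume_eq_prod, Measure.prod_prod, Real.volume_Icc, Real.volume_Icc]

noncomputable def shear (a b : ℝ) : ℝ × ℝ →ₗ[ℝ] ℝ × ℝ :=
  (LinearMap.fst ℝ ℝ ℝ + a • LinearMap.snd ℝ ℝ ℝ).prod (b • LinearMap.snd ℝ ℝ ℝ)

@[simp]
lemma shear_apply (a b : ℝ) (p : ℝ × ℝ) : shear a b p = (p.1 + a * p.2, b * p.2) := rfl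

lemma det_shear (a b : ℝ) : LinearMap.det (shear a b) = b := by
  rw [← LinearMap.det_toMatrix (Module.Basis.finTwoProd ℝ), Matrix.det_fin_two]
  simp [LinearMap.toMatrix_apply]

lemma shear_injective (a : ℝ) {b : ℝ} (hb : b ≠ 0) : Function.Injective (shear a b) := by
  rintro ⟨s, t⟩ ⟨s', t'⟩ h
  simp only [shear_apply, Prod.mk.injEq, mul_right_inj' hb] at h
  obtain ⟨h1, rfl⟩ := h
  simpa using h1

lemma polar_eq_shear {γ : ℝ} (hγ : sin γ ≠ 0) (r θ : ℝ) :
    (r * cos θ, r * sin θ) =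
      shear (cos γ) (sin γ) (r * sin (γ - θ) / sin γ, r * sin θ / sin γ) := by
  ext <;> simp only [shear_apply, sin_sub] <;> field_simp
  ring

lemma exists_polar_eq_shear {γ : ℝ} (hγ0 : 0 < γ) (hγπ : γ < π) {p : ℝ × ℝ} (hp : 0 ≤ p) :
    ∃ r ≥ (0 : ℝ), ∃ θ ∈ Icc 0 γ, shear (cos γ) (sin γ) p = (r * cos θ, r * sin θ) := by
  have hsin : 0 < sin γ := sin_pos_of_pos_of_lt_pi hγ0 hγπ
  set z : ℂ := ⟨p.1 + cos γ * p.2, sin γ * p.2⟩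
  refine ⟨‖z‖, norm_nonneg z, z.arg, ⟨Complex.arg_nonneg_iff.2 ?_, ?_⟩, ?_⟩
  · exact mul_nonneg hsin.le hp.2
  · by_contra! h
    have hz : z ≠ 0 := by rintro hz; rw [hz, Complex.arg_zero] at h; linarith
    have hrot : ‖z‖ * sin (γ - z.arg) = sin γ * p.1 := by
      rw [sin_sub]
      linear_combination sin γ * Complex.norm_mul_cos_arg z - cos γ * Complex.norm_mul_sin_arg z
    have hneg : sin (γ - z.arg) < 0 :=
      sin_neg_of_neg_of_neg_pi_lt (by linarith) (by linarith [Complex.arg_le_pi z])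
    nlinarith [norm_pos_iff.2 hz, mul_nonneg hsin.le hp.1]
  · rw [Complex.norm_mul_cos_arg, Complex.norm_mul_sin_arg, shear_apply]

lemma sector_eq_image_shear {γ : ℝ} (hγ0 : 0 < γ) (hγπ : γ < π) :
    {p : ℝ × ℝ | ∃ r ≥ (0 : ℝ), ∃ θ ∈ Icc 0 γ, p = (r * cos θ, r * sin θ)} =
      shear (cos γ) (sin γ) '' Ici 0 := by
  have hsin : 0 < sin γ := sin_pos_of_pos_of_lt_pi hγ0 hγπ
  ext p
  constructor
  · rintro ⟨r, hr, θ, ⟨hθ0, hθγ⟩, rfl⟩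
    refine ⟨_, ⟨?_, ?_⟩, (polar_eq_shear hsin.ne' r θ).symm⟩
    · exact div_nonneg
        (mul_nonneg hr (sin_nonneg_of_nonneg_of_le_pi (by linarith) (by linarith))) hsin.le
    · exact div_nonneg (mul_nonneg hr (sin_nonneg_of_nonneg_of_le_pi hθ0 (by linarith))) hsin.le
  · rintro ⟨q, hq, rfl⟩
    exact exists_polar_eq_shear hγ0 hγπ hq

/-- For the closed planar sector `C` of opening angle `γ ∈ (0,π)` with one boundary ray
along the positive `x`-axis, and any `y ∈ C`, the area of `(y - C) ∩ C` equals
`y₁ y₂ - cot(γ) y₂²`. -/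
theorem sector_intersection_area (γ : ℝ) (hγ : γ ∈ Set.Ioo 0 π)
    (C : Set (ℝ × ℝ))
    (hC : C = {p : ℝ × ℝ | ∃ r ≥ (0 : ℝ), ∃ θ ∈ Set.Icc (0 : ℝ) γ,
      p = (r * Real.cos θ, r * Real.sin θ)})
    (y : ℝ × ℝ) (hy : y ∈ C) :
    (volume (((fun c => y - c) '' C) ∩ C)).toReal =
      y.1 * y.2 - (Real.cos γ / Real.sin γ) * y.2 ^ 2 := by
  obtain ⟨hγ0, hγπ⟩ := hγ
  have hsin : 0 < sin γ := sin_pos_of_pos_of_lt_pi hγ0 hγπ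
  rw [hC, sector_eq_image_shear hγ0 hγπ] at hy ⊢
  obtain ⟨x, ⟨hx1, hx2⟩, rfl⟩ := hy
  rw [image_const_sub_image_inter_image (shear_injective _ hsin.ne'), image_const_sub_Ici,
    sub_zero, Iic_inter_Ici, Measure.addHaar_image_linearMap, det_shear, volume_Icc_prod]
  simp only [shear_apply, Prod.fst_zero, Prod.snd_zero, sub_zero, abs_of_pos hsin]
  rw [ENNReal.toReal_mul, ENNReal.toReal_mul, ENNReal.toReal_ofReal hsin.le,
    ENNReal.toReal_ofReal hx1, ENNReal.toReal_ofReal hx2]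
  field_simp
  ring
end

section
/- Let c, c' > 0, N ∈ ℕ, d ≥ 1, M := N + d + 1, and suppose a kernel bound ‖T_{x,y}‖ ≤ c·⟨x−y⟩^{−M} holds for all x, y ∈ ℤ^d, where each T_{x,y} is a bounded operator. Then for every k ≥ 2 and all a, b ∈ ℤ^d, the (k−1)-fold lattice convolution sum Σ_{y₁,…,y_{k−1} ∈ ℤ^d} ⟨a−y₁⟩^{−M} ⟨y₁−y₂⟩^{−M} ⋯ ⟨y_{k−1}−b⟩^{−M} is bounded by (2^{N/2} c')^{k−1} ⟨a−b⟩^{−N}, where c' = sup_{|x|≤1} Σ_{y∈ℤ^d} ⟨y+x⟩^{−d−1}. -/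
open Real

/-- The Japanese bracket `⟨v⟩ = (1+‖v‖²)^{1/2}`. -/
noncomputable def jb (d : ℕ) (v : EuclideanSpace ℝ (Fin d)) : ℝ :=
  (1 + ‖v‖ ^ 2) ^ ((1 : ℝ) / 2)

/-- Embedding of `ℤ^d` into Euclidean space. -/
noncomputable def toR (d : ℕ) (v : Fin d → ℤ) : EuclideanSpace ℝ (Fin d) :=
  (EuclideanSpace.equiv (Fin d) ℝ).symm fun i => (v i : ℝ)

/-- The `k`-fold lattice convolution of the weight `⟨·⟩^{-M}`: `iterK d M (k-1) a b` is
the sum `Σ_{y₁,…,y_{k-1}} ⟨a-y₁⟩^{-M} ⟨y₁-y₂⟩^{-M} ⋯ ⟨y_{k-1}-b⟩^{-M}`. -/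
noncomputable def iterK (d M : ℕ) : ℕ → (Fin d → ℤ) → (Fin d → ℤ) → ℝ
  | 0, a, b => jb d (toR d (a - b)) ^ (-(M : ℤ))
  | m + 1, a, b => ∑' y : Fin d → ℤ, iterK d M m a y * jb d (toR d (y - b)) ^ (-(M : ℤ))

/-!
Induction on the number of factors. Splitting `⟨y - b⟩^{-M} = ⟨y - b⟩^{-N} ⟨y - b⟩^{-(d+1)}`,
Peetre's inequality `⟨a - y⟩^{-N} ⟨y - b⟩^{-N} ≤ 2^{N/2} ⟨a - b⟩^{-N}` pulls `⟨a - b⟩^{-N}` out of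
each new sum, leaving `∑_y ⟨y - b⟩^{-(d+1)} = ∑_y ⟨y⟩^{-(d+1)}`. This is finite because `ℤ^d` is a
lattice of rank `d` in `ℝ^d`, and it is the value at `x = 0` of the function whose supremum over the
unit ball is `c'`; that supremum is finite since `⟨y⟩ ≤ 2 ⟨y + x⟩` for `‖x‖ ≤ 1`.
-/

open Metric

lemma zpow_neg_le_of_le_mul {a b t : ℝ} (ha : 0 < a) (hb : 0 < b) (h : b ≤ t * a) (n : ℕ) :
    a ^ (-(n : ℤ)) ≤ t ^ n * b ^ (-(n : ℤ)) := by
  simp only [zpow_neg, zpow_natCast]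
  rw [← div_eq_mul_inv, le_div_iff₀ (pow_pos hb n), inv_mul_le_iff₀ (pow_pos ha n), ← mul_pow,
    mul_comm a]
  exact pow_le_pow_left₀ hb.le h n

section JapaneseBracket

variable {d : ℕ}

lemma jb_eq_sqrt (v : EuclideanSpace ℝ (Fin d)) : jb d v = √(1 + ‖v‖ ^ 2) :=
  (sqrt_eq_rpow _).symm

lemma norm_le_jb (v : EuclideanSpace ℝ (Fin d)) : ‖v‖ ≤ jb d v := by
  rw [jb_eq_sqrt]
  exact le_sqrt_of_sq_le (by linarith)

lemma jb_pos (v : EuclideanSpace ℝ (Fin d)) : 0 < jb d v := by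
  rw [jb_eq_sqrt]
  positivity

lemma one_le_jb (v : EuclideanSpace ℝ (Fin d)) : 1 ≤ jb d v := by
  rw [jb_eq_sqrt]
  exact one_le_sqrt.mpr (by nlinarith)

lemma jb_zpow_nonneg (v : EuclideanSpace ℝ (Fin d)) (p : ℤ) : 0 ≤ jb d v ^ p :=
  (zpow_pos (jb_pos v) p).le

lemma jb_add_le (u v : EuclideanSpace ℝ (Fin d)) : jb d (u + v) ≤ √2 * (jb d u * jb d v) := by
  have hnorm := norm_add_le u v
  rw [jb_eq_sqrt, jb_eq_sqrt, jb_eq_sqrt, ← sqrt_mul (by positivity), ← sqrt_mul zero_le_two]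
  exact sqrt_le_sqrt
    (by nlinarith [norm_nonneg (u + v), norm_nonneg u, norm_nonneg v, sq_nonneg (‖u‖ - ‖v‖)])

lemma jb_zpow_neg_mul_le (u v : EuclideanSpace ℝ (Fin d)) (n : ℕ) :
    jb d u ^ (-(n : ℤ)) * jb d v ^ (-(n : ℤ)) ≤
      (2 : ℝ) ^ ((n : ℝ) / 2) * jb d (u + v) ^ (-(n : ℤ)) := by
  have hsqrt : (2 : ℝ) ^ ((n : ℝ) / 2) = √2 ^ n := by
    rw [sqrt_eq_rpow, ← rpow_natCast, ← rpow_mul zero_le_two, one_div_mul_eq_div]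
  rw [← mul_zpow, hsqrt]
  exact zpow_neg_le_of_le_mul (mul_pos (jb_pos u) (jb_pos v)) (jb_pos _) (jb_add_le u v) n

lemma jb_le_two_mul_jb_add {x : EuclideanSpace ℝ (Fin d)} (hx : ‖x‖ ≤ 1)
    (v : EuclideanSpace ℝ (Fin d)) : jb d v ≤ 2 * jb d (v + x) := by
  have hx' : jb d (-x) ≤ √2 := by
    rw [jb_eq_sqrt, norm_neg]
    exact sqrt_le_sqrt (by nlinarith [norm_nonneg x])
  calc jb d v = jb d ((v + x) + -x) := by rw [add_neg_cancel_right]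
    _ ≤ √2 * (jb d (v + x) * jb d (-x)) := jb_add_le _ _
    _ ≤ √2 * (jb d (v + x) * √2) := by gcongr; exact (jb_pos _).le
    _ = 2 * jb d (v + x) := by rw [mul_comm, mul_assoc, mul_self_sqrt zero_le_two, mul_comm]

end JapaneseBracket

section LatticeSums

variable {d : ℕ}

lemma toR_add (u v : Fin d → ℤ) : toR d (u + v) = toR d u + toR d v := by
  ext i
  simp [toR]

lemma toR_zero : toR d 0 = 0 := by
  ext i
  simp [toR]

lemma toR_injective : Function.Injective (toR d) := fun u v h => by
  ext i
  simpa [toR] using congrArg (· i) h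

lemma toR_mem_span_basisFun (y : Fin d → ℤ) :
    toR d y ∈ Submodule.span ℤ (Set.range (EuclideanSpace.basisFun (Fin d) ℝ).toBasis) := by
  have hy : toR d y = ∑ i, y i • (EuclideanSpace.basisFun (Fin d) ℝ).toBasis i := by
    ext j
    simp [toR, Finset.sum_apply, Pi.single_apply]
  rw [hy]
  exact Submodule.sum_mem _ fun i _ => Submodule.smul_mem _ _ (Submodule.subset_span ⟨i, rfl⟩)

lemma summable_jb_toR_zpow_neg {n : ℕ} (hn : d < n) :
    Summable fun y : Fin d → ℤ => jb d (toR d y) ^ (-(n : ℤ)) := by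
  set L := Submodule.span ℤ (Set.range (EuclideanSpace.basisFun (Fin d) ℝ).toBasis)
  have hrank : Module.finrank ℤ L = d := by
    rw [finrank_span_eq_card
      ((EuclideanSpace.basisFun (Fin d) ℝ).toBasis.linearIndependent.restrict_scalars' ℤ)]
    simp
  have hL : Summable fun z : L => ‖z‖ ^ (-(n : ℝ)) :=
    ZLattice.summable_norm_rpow L _ (by rw [hrank, neg_lt_neg_iff]; exact_mod_cast hn)
  have hinj : Function.Injective fun y => (⟨toR d y, toR_mem_span_basisFun y⟩ : L) :=
    fun u v h => toR_injective (congrArg Subtype.val h)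
  refine (hL.comp_injective hinj).of_norm_bounded_eventually ?_
  filter_upwards [Filter.eventually_cofinite_ne 0] with y hy
  have hy' : 0 < ‖toR d y‖ := norm_pos_iff.mpr fun h => hy (toR_injective (h.trans toR_zero.symm))
  rw [norm_of_nonneg (jb_zpow_nonneg _ _)]
  change _ ≤ ‖toR d y‖ ^ (-(n : ℝ))
  rw [rpow_neg (norm_nonneg _), rpow_natCast, zpow_neg, zpow_natCast]
  exact inv_anti₀ (pow_pos hy' n) (pow_le_pow_left₀ hy'.le (norm_le_jb _) n)

noncomputable def jbLatticeSum (d n : ℕ) : ℝ :=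
  ∑' y : Fin d → ℤ, jb d (toR d y) ^ (-(n : ℤ))

lemma jbLatticeSum_nonneg (n : ℕ) : 0 ≤ jbLatticeSum d n :=
  tsum_nonneg fun _ => jb_zpow_nonneg _ _

lemma tsum_jb_toR_sub_zpow_neg (n : ℕ) (b : Fin d → ℤ) :
    ∑' y : Fin d → ℤ, jb d (toR d (y - b)) ^ (-(n : ℤ)) = jbLatticeSum d n :=
  (Equiv.subRight b).tsum_eq fun y => jb d (toR d y) ^ (-(n : ℤ))

lemma summable_jb_toR_sub_zpow_neg {n : ℕ} (hn : d < n) (b : Fin d → ℤ) :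
    Summable fun y : Fin d → ℤ => jb d (toR d (y - b)) ^ (-(n : ℤ)) :=
  (Equiv.subRight b).summable_iff.mpr (summable_jb_toR_zpow_neg hn)

lemma tsum_jb_toR_add_zpow_neg_le {n : ℕ} (hn : d < n) {x : EuclideanSpace ℝ (Fin d)}
    (hx : ‖x‖ ≤ 1) :
    ∑' y : Fin d → ℤ, jb d (toR d y + x) ^ (-(n : ℤ)) ≤ 2 ^ n * jbLatticeSum d n := by
  have hle : ∀ y : Fin d → ℤ,
      jb d (toR d y + x) ^ (-(n : ℤ)) ≤ 2 ^ n * jb d (toR d y) ^ (-(n : ℤ)) := fun y =>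
    zpow_neg_le_of_le_mul (jb_pos _) (jb_pos _) (jb_le_two_mul_jb_add hx _) n
  have hsum := (summable_jb_toR_zpow_neg hn).mul_left (2 ^ n)
  rw [jbLatticeSum, ← tsum_mul_left]
  exact (hsum.of_nonneg_of_le (fun _ => jb_zpow_nonneg _ _) hle).tsum_le_tsum hle hsum

lemma jbLatticeSum_le_iSup {n : ℕ} (hn : d < n) :
    jbLatticeSum d n ≤
      ⨆ x ∈ closedBall (0 : EuclideanSpace ℝ (Fin d)) 1,
        ∑' y : Fin d → ℤ, jb d (toR d y + x) ^ (-(n : ℤ)) := by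
  have hbdd : BddAbove (⋃ x : EuclideanSpace ℝ (Fin d), Set.range fun _ : x ∈ closedBall 0 1 =>
      ∑' y : Fin d → ℤ, jb d (toR d y + x) ^ (-(n : ℤ))) := by
    refine ⟨2 ^ n * jbLatticeSum d n, ?_⟩
    rintro _ ⟨_, ⟨x, rfl⟩, hx, rfl⟩
    exact tsum_jb_toR_add_zpow_neg_le hn (mem_closedBall_zero_iff.mp hx)
  simpa [jbLatticeSum] using le_ciSup₂ hbdd 0 (mem_closedBall_self zero_le_one)

end LatticeSums

section IteratedSums

variable {d M : ℕ}

lemma iterK_nonneg (m : ℕ) (a b : Fin d → ℤ) : 0 ≤ iterK d M m a b := by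
  induction m generalizing b with
  | zero => exact jb_zpow_nonneg _ _
  | succ m ih => exact tsum_nonneg fun y => mul_nonneg (ih y) (jb_zpow_nonneg _ _)

theorem iterK_le {N : ℕ} (hM : M = N + d + 1) (m : ℕ) (a b : Fin d → ℤ) :
    iterK d M m a b ≤
      ((2 : ℝ) ^ ((N : ℝ) / 2) * jbLatticeSum d (d + 1)) ^ m *
        jb d (toR d (a - b)) ^ (-(N : ℤ)) := by
  set C := (2 : ℝ) ^ ((N : ℝ) / 2) * jbLatticeSum d (d + 1)
  induction m generalizing b with
  | zero =>
    rw [pow_zero, one_mul]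
    exact zpow_le_zpow_right₀ (one_le_jb _) (by omega)
  | succ m ih =>
    have hC : 0 ≤ C := mul_nonneg (rpow_nonneg zero_le_two _) (jbLatticeSum_nonneg _)
    set K := C ^ m * ((2 : ℝ) ^ ((N : ℝ) / 2) * jb d (toR d (a - b)) ^ (-(N : ℤ)))
    set g := fun y : Fin d → ℤ => jb d (toR d (y - b)) ^ (-((d + 1 : ℕ) : ℤ))
    have hterm : ∀ y, iterK d M m a y * jb d (toR d (y - b)) ^ (-(M : ℤ)) ≤ K * g y := by
      intro y
      have hsplit : jb d (toR d (y - b)) ^ (-(M : ℤ)) =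
          jb d (toR d (y - b)) ^ (-(N : ℤ)) * g y := by
        rw [← zpow_add₀ (jb_pos _).ne', hM]
        push_cast
        ring_nf
      have hpeetre := jb_zpow_neg_mul_le (toR d (a - y)) (toR d (y - b)) N
      rw [← toR_add, sub_add_sub_cancel] at hpeetre
      calc iterK d M m a y * jb d (toR d (y - b)) ^ (-(M : ℤ))
          ≤ C ^ m * jb d (toR d (a - y)) ^ (-(N : ℤ)) *
              (jb d (toR d (y - b)) ^ (-(N : ℤ)) * g y) := by
            rw [hsplit]
            exact mul_le_mul_of_nonneg_right (ih y)
              (mul_nonneg (jb_zpow_nonneg _ _) (jb_zpow_nonneg _ _))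
        _ = C ^ m * (jb d (toR d (a - y)) ^ (-(N : ℤ)) * jb d (toR d (y - b)) ^ (-(N : ℤ))) *
              g y := by ring
        _ ≤ K * g y :=
            mul_le_mul_of_nonneg_right (mul_le_mul_of_nonneg_left hpeetre (pow_nonneg hC m))
              (jb_zpow_nonneg _ _)
    have hg : Summable g := summable_jb_toR_sub_zpow_neg (Nat.lt_succ_self d) b
    calc iterK d M (m + 1) a b
        = ∑' y, iterK d M m a y * jb d (toR d (y - b)) ^ (-(M : ℤ)) := rfl
      _ ≤ ∑' y, K * g y :=
          ((hg.mul_left K).of_nonneg_of_le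
            (fun y => mul_nonneg (iterK_nonneg m a y) (jb_zpow_nonneg _ _)) hterm).tsum_le_tsum
            hterm (hg.mul_left K)
      _ = C ^ (m + 1) * jb d (toR d (a - b)) ^ (-(N : ℤ)) := by
          rw [tsum_mul_left, tsum_jb_toR_sub_zpow_neg]
          ring

end IteratedSums

theorem iterated_lattice_sum_decay_general
    (d N : ℕ) (M : ℕ) (hM : M = N + d + 1)
    (c' : ℝ)
    (hc' : c' = ⨆ x ∈ Metric.closedBall (0 : EuclideanSpace ℝ (Fin d)) 1,
      ∑' y : Fin d → ℤ, jb d (toR d y + x) ^ (-(d : ℤ) - 1))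
    (k : ℕ) (a b : Fin d → ℤ) :
    iterK d M (k - 1) a b ≤
      ((2 : ℝ) ^ ((N : ℝ) / 2) * c') ^ (k - 1) * jb d (toR d (a - b)) ^ (-(N : ℤ)) := by
  have hexp : -(d : ℤ) - 1 = -((d + 1 : ℕ) : ℤ) := by push_cast; ring
  have hS : jbLatticeSum d (d + 1) ≤ c' := by
    rw [hc', hexp]
    exact jbLatticeSum_le_iSup (Nat.lt_succ_self d)
  calc iterK d M (k - 1) a b
      ≤ ((2 : ℝ) ^ ((N : ℝ) / 2) * jbLatticeSum d (d + 1)) ^ (k - 1) *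
          jb d (toR d (a - b)) ^ (-(N : ℤ)) := iterK_le hM (k - 1) a b
    _ ≤ _ := by
      gcongr
      · exact jb_zpow_nonneg _ _
      · exact mul_nonneg (rpow_nonneg zero_le_two _) (jbLatticeSum_nonneg _)

/-- Iterated lattice sums of weights decaying at order `M = N + d + 1` decay at rate `N`,
with constant `(2^{N/2} c')^{k-1}` where `c' = sup_{|x|≤1} Σ_{y∈ℤ^d} ⟨y+x⟩^{-d-1}`. -/
theorem iterated_lattice_sum_decay {H : Type*} [NormedAddCommGroup H] [NormedSpace ℂ H]
    (d N : ℕ) (hd : 1 ≤ d) (M : ℕ) (hM : M = N + d + 1)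
    (c : ℝ) (hc : 0 < c) (T : (Fin d → ℤ) → (Fin d → ℤ) → H →L[ℂ] H)
    (hT : ∀ x y : Fin d → ℤ, ‖T x y‖ ≤ c * jb d (toR d (x - y)) ^ (-(M : ℤ)))
    (c' : ℝ)
    (hc' : c' = ⨆ x ∈ Metric.closedBall (0 : EuclideanSpace ℝ (Fin d)) 1,
      ∑' y : Fin d → ℤ, jb d (toR d y + x) ^ (-(d : ℤ) - 1))
    (k : ℕ) (hk : 2 ≤ k) (a b : Fin d → ℤ) :
    iterK d M (k - 1) a b ≤
      ((2 : ℝ) ^ ((N : ℝ) / 2) * c') ^ (k - 1) * jb d (toR d (a - b)) ^ (-(N : ℤ)) :=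
  iterated_lattice_sum_decay_general d N M hM c' hc' k a b
end
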